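/- Let 0 < α₂ < α₁. Then the map Φ : (0,1] × (0,∞) → ℝ², Φ(r, w) = ( (2r/(α₂ w)) sin(π α₂/α₁), (1/(2w²))(2π/α₁ − (r²/α₂) sin(2π α₂/α₁)) ), is injective. -/

import Mathlib

open Real

/-- The map `(r,w) ↦ (ρ, z)` recording the radial coordinate in the `(x₂,y₂)`-plane and the
vertical coordinate of the endpoint, at the cut time `t* = 2π/(α₁ w)`, of the bi-Heisenberg
geodesic with covector parameters `r₂ = r` and `w > 0` (case `0 < α₂ < α₁`). -/
noncomputable def Phi (α₁ α₂ : ℝ) (p : ℝ × ℝ) : ℝ × ℝ :=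
  (2 * p.1 / (α₂ * p.2) * Real.sin (Real.pi * α₂ / α₁),
   1 / (2 * p.2 ^ 2) * (2 * Real.pi / α₁ - p.1 ^ 2 / α₂ * Real.sin (2 * Real.pi * α₂ / α₁)))

open Set

/-! In terms of the ratio `r / w`, `Φ(r, w) = (a · r/w, b / w² + c · (r/w)²)` with
`a = 2 sin(πα₂/α₁)/α₂ ≠ 0` and `b = π/α₁ ≠ 0`. The first coordinate recovers `r / w`, the
second then recovers `w²`, hence `w > 0`, hence `r`. -/

theorem injOn_ratio_map {a b c : ℝ} (ha : a ≠ 0) (hb : b ≠ 0) :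
    InjOn (fun p : ℝ × ℝ => (a * (p.1 / p.2), b / p.2 ^ 2 + c * (p.1 / p.2) ^ 2))
      {p | 0 < p.2} := by
  rintro ⟨r₁, w₁⟩ (hw₁ : 0 < w₁) ⟨r₂, w₂⟩ (hw₂ : 0 < w₂) h
  obtain ⟨h_ratio, h_vert⟩ := Prod.mk.inj h
  have ratio_eq : r₁ / w₁ = r₂ / w₂ := mul_left_cancel₀ ha h_ratio
  rw [ratio_eq, add_left_inj] at h_vert
  have w_eq : w₁ = w₂ := by
    have hsq : w₁ ^ 2 = w₂ ^ 2 := inv_injective (mul_left_cancel₀ hb h_vert)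
    exact (pow_left_inj₀ hw₁.le hw₂.le two_ne_zero).mp hsq
  subst w_eq
  rw [div_left_inj' hw₁.ne'] at ratio_eq
  rw [ratio_eq]

theorem Phi_eq_ratio_map (α₁ α₂ : ℝ) :
    Phi α₁ α₂ = fun p => (2 * sin (π * α₂ / α₁) / α₂ * (p.1 / p.2),
      π / α₁ / p.2 ^ 2 + -(sin (2 * π * α₂ / α₁) / (2 * α₂)) * (p.1 / p.2) ^ 2) := by
  funext p
  simp only [Phi, Prod.mk.injEq]
  constructor <;> ring

theorem sin_pi_mul_div_pos {α₁ α₂ : ℝ} (hα₂ : 0 < α₂) (hα : α₂ < α₁) :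
    0 < sin (π * α₂ / α₁) := by
  have hα₁ : 0 < α₁ := hα₂.trans hα
  apply sin_pos_of_pos_of_lt_pi (by positivity)
  rw [div_lt_iff₀ hα₁]
  exact mul_lt_mul_of_pos_left hα pi_pos

/-- For `0 < α₂ < α₁`, the map `Φ : (0,1] × (0,∞) → ℝ²` is injective. -/
theorem Phi_injective (α₁ α₂ : ℝ) (hα₂ : 0 < α₂) (hα : α₂ < α₁) :
    Set.InjOn (Phi α₁ α₂) (Set.Ioc (0:ℝ) 1 ×ˢ Set.Ioi (0:ℝ)) := by
  have hα₁ : 0 < α₁ := hα₂.trans hα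
  rw [Phi_eq_ratio_map]
  refine (injOn_ratio_map ?_ ?_).mono fun p hp => hp.2
  · have := sin_pi_mul_div_pos hα₂ hα
    positivity
  · positivity
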